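/- arXiv:2106.14963 — 6 statements merged into one kernel-verified Lean document; each statement's English description precedes it below -/
import Mathlib

section
/- Let a, b, c, d be integers with a³ + b³ + c³ = d³. Then for all integers u and v, setting q₁ = a(a+c)u² + (d−b)(d+b)uv − c(d−b)v², q₂ = b(a+c)u² − (c−a)(c+a)uv + d(d−b)v², q₃ = c(a+c)u² − (d−b)(d+b)uv − a(d−b)v², and q₄ = d(a+c)u² − (c−a)(c+a)uv + b(d−b)v², one has q₁³ + q₂³ + q₃³ = q₄³. -/
theorem stmt_1 (a b c d : ℤ) (h : a^3 + b^3 + c^3 = d^3) (u v : ℤ)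
    (q₁ q₂ q₃ q₄ : ℤ)
    (h₁ : q₁ = a*(a+c)*u^2 + (d-b)*(d+b)*u*v - c*(d-b)*v^2)
    (h₂ : q₂ = b*(a+c)*u^2 - (c-a)*(c+a)*u*v + d*(d-b)*v^2)
    (h₃ : q₃ = c*(a+c)*u^2 - (d-b)*(d+b)*u*v - a*(d-b)*v^2)
    (h₄ : q₄ = d*(a+c)*u^2 - (c-a)*(c+a)*u*v + b*(d-b)*v^2) :
    q₁^3 + q₂^3 + q₃^3 = q₄^3 := by
  subst h₁ h₂ h₃ h₄
  linear_combination ((-1)*d^3*v^6 + 3*c*d^2*u^2*v^4 + (-3)*c^2*d*u^4*v^2 + c^3*u^6 + 3*b*d^2*v^6 + (-6)*b*c*d*u^2*v^4 + 3*b*c^2*u^4*v^2 + (-3)*b^2*d*v^6 + 3*b^2*c*u^2*v^4 + b^3*v^6 + 3*a*d^2*u^2*v^4 + (-6)*a*c*d*u^4*v^2 + 3*a*c^2*u^6 + (-6)*a*b*d*u^2*v^4 + 6*a*b*c*u^4*v^2 + 3*a*b^2*u^2*v^4 + (-3)*a^2*d*u^4*v^2 + 3*a^2*c*u^6 + 3*a^2*b*u^4*v^2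 + a^3*u^6) * h
end

section
/- For all integers x, y, u, v and all integers a, b, c, d satisfying a³ + b³ + c³ = d³, if x = d²v − b²v + a²u − c²u and y = dv² − bv² − cu² − au², then (ux − cy)³ + (−ux − ay)³ + (vx − by)³ = (vx − dy)³. -/
theorem stmt_2 (x y u v a b c d : ℤ) (h : a^3 + b^3 + c^3 = d^3)
    (hx : x = d^2*v - b^2*v + a^2*u - c^2*u)
    (hy : y = d*v^2 - b*v^2 - c*u^2 - a*u^2) :
    (u*x - c*y)^3 + (-(u*x) - a*y)^3 + (v*x - b*y)^3 = (v*x - d*y)^3 := by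
  subst hx hy
  linear_combination (a^3*u^6 + 3*a^2*b*u^4*v^2 + 3*a^2*c*u^6 - 3*a^2*d*u^4*v^2 +
    3*a*b^2*u^2*v^4 + 6*a*b*c*u^4*v^2 - 6*a*b*d*u^2*v^4 + 3*a*c^2*u^6 -
    6*a*c*d*u^4*v^2 + 3*a*d^2*u^2*v^4 + b^3*v^6 + 3*b^2*c*u^2*v^4 - 3*b^2*d*v^6 +
    3*b*c^2*u^4*v^2 - 6*b*c*d*u^2*v^4 + 3*b*d^2*v^6 + c^3*u^6 - 3*c^2*d*u^4*v^2 +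
    3*c*d^2*u^2*v^4 - d^3*v^6) * h
end

section
/- For all positive integers k and m, S_k(n)·S_m(n) = (1/(k+1)) Σ_{j=0}^{⌊k/2⌋} B_{2j} C(k+1, 2j) S_{k+m+1−2j}(n) + (1/(m+1)) Σ_{j=0}^{⌊m/2⌋} B_{2j} C(m+1, 2j) S_{k+m+1−2j}(n), for every natural number n. -/
def S (k n : ℕ) : ℚ := ∑ i ∈ Finset.Icc 1 n, (i : ℚ)^k

lemma S_succ (k n : ℕ) : S k (n+1) = S k n + ((n:ℚ)+1)^k := by
  unfold S
  rw [Finset.sum_Icc_succ_top (by omega)]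
  push_cast
  ring

lemma aux (k n : ℕ) (hk : 0 < k) :
    (1 / ((k:ℚ) + 1)) * ∑ j ∈ Finset.range (k / 2 + 1),
        bernoulli (2 * j) * (Nat.choose (k + 1) (2 * j)) * ((n:ℚ)+1) ^ (k + 1 - 2 * j)
    = S k n + ((n:ℚ)+1)^k / 2 := by
  have hfa : (∑ i ∈ Finset.range (n+1), (i : ℚ) ^ k) =
      ∑ i ∈ Finset.range (k + 1),
        bernoulli i * ((k + 1).choose i) * ((n+1 : ℕ) : ℚ) ^ (k + 1 - i) / (k + 1) :=
    sum_range_pow (n+1) k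
  have hS : (∑ i ∈ Finset.range (n+1), (i : ℚ) ^ k) = S k n := by
    unfold S
    rw [Finset.range_eq_Ico, show Finset.Ico 0 (n+1) = insert 0 (Finset.Icc 1 n) by
      ext x; simp [Finset.mem_Ico, Finset.mem_Icc]; omega]
    rw [Finset.sum_insert (by simp)]
    simp [zero_pow hk.ne']
  -- split the Faulhaber sum into even and odd indices
  rw [hS] at hfa
  have hsplit := Finset.sum_filter_add_sum_filter_not (Finset.range (k+1)) (fun i => Even i)
      (fun i => bernoulli i * ((k + 1).choose i) * ((n+1:ℕ) : ℚ) ^ (k + 1 - i) / (k + 1))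
  have hodd : ∑ i ∈ (Finset.range (k+1)).filter (fun i => ¬ Even i),
      bernoulli i * ((k + 1).choose i) * ((n+1:ℕ) : ℚ) ^ (k + 1 - i) / (k + 1)
      = -(((n:ℚ)+1)^k / 2) := by
    rw [Finset.sum_eq_single_of_mem 1]
    · rw [Nat.choose_one_right, bernoulli_one, show k + 1 - 1 = k from rfl]
      push_cast
      field_simp
    · simp [Finset.mem_filter, Finset.mem_range]; omega
    · intro b hb hb1
      simp only [Finset.mem_filter, Finset.mem_range] at hb
      have hob : Odd b := Nat.not_even_iff_odd.mp hb.2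
      have hb2 : b % 2 = 1 := Nat.odd_iff.mp hob
      have : bernoulli b = 0 := by
        rw [bernoulli_eq_bernoulli'_of_ne_one hb1]
        exact bernoulli'_eq_zero_of_odd hob (by omega)
      simp [this]
  have heven : ∑ i ∈ (Finset.range (k+1)).filter (fun i => Even i),
      bernoulli i * ((k + 1).choose i) * ((n+1:ℕ) : ℚ) ^ (k + 1 - i) / (k + 1)
      = ∑ j ∈ Finset.range (k / 2 + 1),
        bernoulli (2 * j) * ((k + 1).choose (2 * j)) * ((n:ℚ)+1) ^ (k + 1 - 2 * j) / (k + 1) := by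
    rw [Finset.sum_nbij' (i := fun i => i / 2) (j := fun j => 2 * j)]
    · intro i hi
      simp only [Finset.mem_filter, Finset.mem_range] at hi
      simp only [Finset.mem_range]
      omega
    · intro j hj
      simp only [Finset.mem_range] at hj
      simp only [Finset.mem_filter, Finset.mem_range]
      constructor
      · omega
      · exact even_two_mul j
    · intro i hi
      simp only [Finset.mem_filter, Finset.mem_range] at hi
      obtain ⟨c, hc⟩ := hi.2
      omega
    · intro j hj; omega
    · intro i hi
      simp only [Finset.mem_filter, Finset.mem_range] at hi
      obtain ⟨c, hc⟩ := hi.2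
      have : 2 * (i / 2) = i := by omega
      rw [this]
      push_cast
      ring_nf
  rw [hodd, heven] at hsplit
  rw [← hsplit] at hfa
  have hmul : (1 / ((k:ℚ) + 1)) * ∑ j ∈ Finset.range (k / 2 + 1),
        bernoulli (2 * j) * ((Nat.choose (k + 1) (2 * j)) : ℚ) * ((n:ℚ)+1) ^ (k + 1 - 2 * j)
      = ∑ j ∈ Finset.range (k / 2 + 1),
        bernoulli (2 * j) * ((Nat.choose (k + 1) (2 * j)) : ℚ) * ((n:ℚ)+1) ^ (k + 1 - 2 * j) / ((k:ℚ)+1) := by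
    rw [Finset.mul_sum]
    exact Finset.sum_congr rfl fun j _ => by ring
  rw [hmul]
  linarith [hfa]

theorem stmt_12 (k m : ℕ) (hk : 0 < k) (hm : 0 < m) (n : ℕ) :
    S k n * S m n =
      (1 / (k + 1)) * ∑ j ∈ Finset.range (k / 2 + 1),
        bernoulli (2 * j) * (Nat.choose (k + 1) (2 * j)) * S (k + m + 1 - 2 * j) n
      + (1 / (m + 1)) * ∑ j ∈ Finset.range (m / 2 + 1),
        bernoulli (2 * j) * (Nat.choose (m + 1) (2 * j)) * S (k + m + 1 - 2 * j) n := by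
  induction n with
  | zero => simp [S]
  | succ n ih =>
    have x := ((n:ℚ)+1)
    -- rewrite all S _ (n+1)
    have key : ∀ p : ℕ, 0 < p → ∀ q : ℕ,
        (1 / ((p:ℚ) + 1)) * ∑ j ∈ Finset.range (p / 2 + 1),
          bernoulli (2 * j) * (Nat.choose (p + 1) (2 * j)) * S (p + q + 1 - 2 * j) (n+1)
        = (1 / ((p:ℚ) + 1)) * (∑ j ∈ Finset.range (p / 2 + 1),
            bernoulli (2 * j) * (Nat.choose (p + 1) (2 * j)) * S (p + q + 1 - 2 * j) n)
          + ((n:ℚ)+1)^q * (S p n + ((n:ℚ)+1)^p / 2) := by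
      intro p hp q
      have h1 : ∀ j ∈ Finset.range (p / 2 + 1),
          bernoulli (2 * j) * ((Nat.choose (p + 1) (2 * j)) : ℚ) * S (p + q + 1 - 2 * j) (n+1)
          = bernoulli (2 * j) * (Nat.choose (p + 1) (2 * j)) * S (p + q + 1 - 2 * j) n
            + bernoulli (2 * j) * (Nat.choose (p + 1) (2 * j)) *
              (((n:ℚ)+1) ^ (p + 1 - 2 * j) * ((n:ℚ)+1)^q) := by
        intro j hj
        simp only [Finset.mem_range] at hj
        rw [S_succ]
        have he : p + q + 1 - 2 * j = (p + 1 - 2*j) + q := by omega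
        rw [he, pow_add]
        ring
      rw [Finset.sum_congr rfl h1, Finset.sum_add_distrib, mul_add]
      congr 1
      have : ∑ j ∈ Finset.range (p / 2 + 1),
          bernoulli (2 * j) * ((Nat.choose (p + 1) (2 * j)):ℚ) *
            (((n:ℚ)+1) ^ (p + 1 - 2 * j) * ((n:ℚ)+1)^q)
          = (∑ j ∈ Finset.range (p / 2 + 1),
            bernoulli (2 * j) * ((Nat.choose (p + 1) (2 * j)):ℚ) * ((n:ℚ)+1) ^ (p + 1 - 2 * j))
            * ((n:ℚ)+1)^q := by
        rw [Finset.sum_mul]; apply Finset.sum_congr rfl; intros; ring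
      rw [this, ← mul_assoc, aux p n hp]
      ring
    rw [S_succ, S_succ]
    have hkq := key k hk m
    have hmq' := key m hm k
    have hcomm : ∀ j : ℕ, m + k + 1 - 2*j = k + m + 1 - 2*j := by intro j; omega
    simp only [hcomm, Nat.add_comm m k] at hmq'
    rw [hkq, hmq']
    have hpow : ((n:ℚ)+1)^(k+m) = ((n:ℚ)+1)^k * ((n:ℚ)+1)^m := pow_add _ k m
    nlinarith [ih, hpow]
end

section
/- For all positive integers k, S_k(n)² = (2/(k+1)) Σ_{j=0}^{⌊k/2⌋} B_{2j} C(k+1, 2j) S_{2k+1−2j}(n), for every natural number n. -/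
lemma bernoulli_odd_zero {i : ℕ} (h : Odd i) (h1 : 1 < i) : bernoulli i = 0 := by
  rw [bernoulli_eq_bernoulli'_of_ne_one (by omega), bernoulli'_eq_zero_of_odd h h1]

lemma split_even (m : ℕ) (hm : 0 < m) (f : ℕ → ℚ) (h : ∀ i, Odd i → 1 < i → f i = 0) :
    ∑ i ∈ Finset.range (m+1), f i = (∑ j ∈ Finset.range (m/2+1), f (2*j)) + f 1 := by
  rw [← Finset.sum_filter_add_sum_filter_not (Finset.range (m+1)) Even f]
  congr 1
  · have himg : Finset.filter Even (Finset.range (m+1))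
        = Finset.image (fun j => 2*j) (Finset.range (m/2+1)) := by
      ext i
      simp only [Finset.mem_filter, Finset.mem_range, Finset.mem_image, Nat.even_iff]
      constructor
      · rintro ⟨h1, h2⟩; exact ⟨i/2, by omega, by omega⟩
      · rintro ⟨j, hj, rfl⟩; omega
    rw [himg, Finset.sum_image (by intro a _ b _ hab; simp only at hab; omega)]
  · apply Finset.sum_eq_single_of_mem
    · simp only [Finset.mem_filter, Finset.mem_range]
      exact ⟨by omega, by simp⟩
    · intro i hi hne
      simp only [Finset.mem_filter, Finset.mem_range] at hi
      have hodd : i % 2 = 1 := Nat.not_even_iff.1 hi.2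
      exact h i (Nat.odd_iff.2 hodd) (by omega)

lemma S_eq_range (k n : ℕ) (hk : 0 < k) :
    S k n = ∑ i ∈ Finset.range (n+1), (i : ℚ)^k := by
  rw [S, Finset.range_eq_Ico, ← Finset.Ico_add_one_right_eq_Icc,
    ← Finset.sum_Ico_consecutive (fun i => (i:ℚ)^k) (Nat.zero_le 1) (by omega)]
  simp [zero_pow hk.ne']

lemma key (k n : ℕ) (hk : 0 < k) :
    2 * S k n + ((n:ℚ)+1)^k =
      (2/((k:ℚ)+1)) * ∑ j ∈ Finset.range (k/2+1),
        bernoulli (2*j) * ((k+1).choose (2*j)) * ((n:ℚ)+1)^(k+1-2*j) := by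
  have hk1 : ((k:ℚ)+1) ≠ 0 := by positivity
  have hf : S k n = (∑ i ∈ Finset.range (k+1),
      bernoulli i * ((k+1).choose i) * ((n:ℚ)+1)^(k+1-i)) / ((k:ℚ)+1) := by
    rw [S_eq_range k n hk, sum_range_pow]
    rw [← Finset.sum_div]
    push_cast
    ring_nf
  rw [hf, split_even k hk _ (fun i hi h1 => by simp [bernoulli_odd_zero hi h1])]
  have h1 : (bernoulli 1 : ℚ) * ((k+1).choose 1) * ((n:ℚ)+1)^(k+1-1) =
      -(((k:ℚ)+1)/2) * ((n:ℚ)+1)^k := by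
    rw [bernoulli_one, Nat.choose_one_right]
    push_cast
    ring
  rw [h1]
  field_simp
  ring

theorem stmt_13 (k : ℕ) (hk : 0 < k) (n : ℕ) :
    (S k n)^2 =
      (2 / (k + 1)) * ∑ j ∈ Finset.range (k / 2 + 1),
        bernoulli (2 * j) * (Nat.choose (k + 1) (2 * j)) * S (2 * k + 1 - 2 * j) n := by
  induction n with
  | zero => simp [S]
  | succ n ih =>
    have hS : ∀ m : ℕ, S m (n+1) = S m n + ((n:ℚ)+1)^m := by
      intro m
      rw [S, Finset.sum_Icc_succ_top (by omega : 1 ≤ n+1)]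
      push_cast; rfl
    have hpow : ∀ j ∈ Finset.range (k/2+1),
        ((n:ℚ)+1)^k * ((n:ℚ)+1)^(k+1-2*j) = ((n:ℚ)+1)^(2*k+1-2*j) := by
      intro j hj
      simp only [Finset.mem_range] at hj
      rw [← pow_add]
      congr 1
      omega
    rw [hS k]
    have expand : (S k n + ((n:ℚ)+1)^k)^2
        = (S k n)^2 + ((n:ℚ)+1)^k * (2 * S k n + ((n:ℚ)+1)^k) := by ring
    rw [expand, ih, key k n hk]
    simp only [hS, mul_add]
    rw [Finset.sum_add_distrib, mul_add]
    congr 1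
    simp only [Finset.mul_sum]
    apply Finset.sum_congr rfl
    intro j hj
    rw [← hpow j hj]
    ring
end

section
/- For every natural number n, (15S₂ + 2S₃ + 75S₄ − 32S₅)³ + (−21S₂ + 126S₃ − 105S₄ + 36S₅)³ + (−15S₂ + 142S₃ − 75S₄ − 4S₅)³ = (−21S₂ + 174S₃ − 105S₄ + 24S₅)³, where S_k = S_k(n) = Σ_{i=1}^n i^k. -/
lemma S2 (n : ℕ) : S 2 n = n*(n+1)*(2*n+1)/6 := by
  induction n with
  | zero => simp [S]
  | succ m ih =>
    rw [S, Finset.sum_Icc_succ_top (by omega), ← S, ih]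
    push_cast; ring

lemma S3 (n : ℕ) : S 3 n = (n*(n+1)/2)^2 := by
  induction n with
  | zero => simp [S]
  | succ m ih =>
    rw [S, Finset.sum_Icc_succ_top (by omega), ← S, ih]
    push_cast; ring

lemma S4 (n : ℕ) : S 4 n = n*(n+1)*(2*n+1)*(3*n^2+3*n-1)/30 := by
  induction n with
  | zero => simp [S]
  | succ m ih =>
    rw [S, Finset.sum_Icc_succ_top (by omega), ← S, ih]
    push_cast; ring

lemma S5 (n : ℕ) : S 5 n = n^2*(n+1)^2*(2*n^2+2*n-1)/12 := by
  induction n with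
  | zero => simp [S]
  | succ m ih =>
    rw [S, Finset.sum_Icc_succ_top (by omega), ← S, ih]
    push_cast; ring

theorem stmt_16 (n : ℕ) :
    (15 * S 2 n + 2 * S 3 n + 75 * S 4 n - 32 * S 5 n)^3
      + (-21 * S 2 n + 126 * S 3 n - 105 * S 4 n + 36 * S 5 n)^3
      + (-15 * S 2 n + 142 * S 3 n - 75 * S 4 n - 4 * S 5 n)^3
    = (-21 * S 2 n + 174 * S 3 n - 105 * S 4 n + 24 * S 5 n)^3 := by
  rw [S2, S3, S4, S5]; ring
end

section
/- Let (a,b,c,d) be integers with a² + b² + c² = d². Then for all integers u and v, (au² − 2duv + av²)² + (bu² − bv²)² + (cu² − cv²)² = (du² − 2auv + dv²)². -/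
theorem stmt_18 (a b c d : ℤ) (h : a^2 + b^2 + c^2 = d^2) (u v : ℤ) :
    (a*u^2 - 2*d*u*v + a*v^2)^2 + (b*u^2 - b*v^2)^2 + (c*u^2 - c*v^2)^2
      = (d*u^2 - 2*a*u*v + d*v^2)^2 := by
  linear_combination (u^2 - v^2)^2 * h
end
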